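/- arXiv:0808.1731 — 5 statements merged into one kernel-verified Lean document; each statement's English description precedes it below -/
import Mathlib

section
/- (Bounded Fuglede–Putnam, Rosenblum's proof ingredient) For bounded normal operators N₁ ∈ B(H₁), N₂ ∈ B(H₂) and V ∈ B(H₁,H₂) with V N₁ = N₂ V, one has exp(i ζ̄ N₂) V exp(-i ζ̄ N₁) = V for all ζ ∈ ℂ, after multiplying by exp(i ζ N₂*) and exp(-i ζ N₁*) the resulting entire bounded function is constant, yielding V N₁* = N₂* V. -/
/-! Intertwining `V A = B V` passes to power series, so `exp B ∘ V ∘ exp (-A) = V`. For normal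
`A` and `B` this gives `exp (-B*) ∘ V ∘ exp A* = (exp (-B*) exp B) ∘ V ∘ (exp (-A) exp A*)`, where
both brackets are exponentials of skew-adjoint operators, hence unitary; so the left side has norm
at most `‖V‖`. Taking `A = i ζ̄ N₁`, `B = i ζ̄ N₂` makes `ζ ↦ exp (i ζ N₂*) ∘ V ∘ exp (-i ζ N₁*)` a
bounded entire function, constant by Liouville's theorem, and its derivative at `0` is
`i (N₂* V - V N₁*) = 0`. -/

open ContinuousLinearMap NormedSpace ComplexConjugate
open scoped Nat

section Intertwining

variable {𝕜 E F : Type*} [RCLike 𝕜] [NormedAddCommGroup E] [NormedSpace 𝕜 E]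
  [NormedAddCommGroup F] [NormedSpace 𝕜 F] {A : E →L[𝕜] E} {B : F →L[𝕜] F} {V : E →L[𝕜] F}

lemma comp_pow_eq_pow_comp (hV : V ∘L A = B ∘L V) (n : ℕ) : V ∘L (A ^ n) = (B ^ n) ∘L V := by
  induction n with
  | zero => simp only [pow_zero, one_def, comp_id, id_comp]
  | succ n ih => rw [pow_succ, pow_succ, mul_def, mul_def, ← comp_assoc, ih, comp_assoc, hV,
      comp_assoc]

variable [CompleteSpace E] [CompleteSpace F]

lemma comp_exp_eq_exp_comp (hV : V ∘L A = B ∘L V) : V ∘L exp A = exp B ∘L V := by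
  have hA : HasSum (fun n => V ∘L ((n !⁻¹ : 𝕜) • A ^ n)) (V ∘L exp A) :=
    (exp_series_hasSum_exp' A).mapL (compL 𝕜 E E F V)
  have hB : HasSum (fun n => V ∘L ((n !⁻¹ : 𝕜) • A ^ n)) (exp B ∘L V) := by
    simpa only [compL_apply, flip_apply, comp_smul, smul_comp, comp_pow_eq_pow_comp hV] using
      (exp_series_hasSum_exp' (𝕂 := 𝕜) B).mapL ((compL 𝕜 E F F).flip V)
  exact hA.unique hB

lemma exp_comp_comp_exp_neg (hV : V ∘L A = B ∘L V) : exp B ∘L V ∘L exp (-A) = V := by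
  let +nondep : NormedAlgebra ℚ (F →L[𝕜] F) := .restrictScalars ℚ 𝕜 _
  have hV_neg : V ∘L (-A) = (-B) ∘L V := by rw [comp_neg, neg_comp, hV]
  rw [comp_exp_eq_exp_comp hV_neg, ← comp_assoc, ← mul_def,
    ← exp_add_of_commute (Commute.refl B).neg_right, add_neg_cancel, exp_zero, one_def, id_comp]

lemma comp_eq_comp_of_exp_smul_comp_comp_exp_smul_neg
    (h : ∀ t : 𝕜, exp (t • B) ∘L V ∘L exp (t • -A) = V) : V ∘L A = B ∘L V := by
  have hderiv : HasDerivAt (fun t : 𝕜 => exp (t • B) ∘L V ∘L exp (t • -A))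
      (B ∘L V - V ∘L A) 0 := by
    simpa [exp_zero, one_def, mul_def, id_comp, sub_eq_add_neg] using
      (hasDerivAt_exp_smul_const B (0 : 𝕜)).clm_comp
        ((hasDerivAt_const (0 : 𝕜) V).clm_comp (hasDerivAt_exp_smul_const (-A) (0 : 𝕜)))
  rw [funext h] at hderiv
  exact (sub_eq_zero.1 (hderiv.unique (hasDerivAt_const 0 V))).symm

end Intertwining

lemma IsStarNormal.exp_neg_star_mul_exp_mem_unitary {𝔸 : Type*} [NormedRing 𝔸]
    [NormedAlgebra ℚ 𝔸] [CompleteSpace 𝔸] [StarRing 𝔸] [ContinuousStar 𝔸] (x : 𝔸)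
    [hx : IsStarNormal x] : exp (-star x) * exp x ∈ unitary 𝔸 := by
  rw [← exp_add_of_commute hx.star_comm_self.neg_left]
  refine exp_mem_unitary_of_mem_skewAdjoint (skewAdjoint.mem_iff.2 ?_)
  rw [star_add, star_neg, star_star, neg_add, neg_neg, add_comm]

section Hilbert

variable {𝕜 H K : Type*} [RCLike 𝕜] [NormedAddCommGroup H] [InnerProductSpace 𝕜 H]
  [CompleteSpace H] [NormedAddCommGroup K] [InnerProductSpace 𝕜 K] [CompleteSpace K]

lemma norm_comp_comp_le_of_mem_unitary {u : K →L[𝕜] K} {v : H →L[𝕜] H}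
    (hu : u ∈ unitary (K →L[𝕜] K)) (hv : v ∈ unitary (H →L[𝕜] H)) (T : H →L[𝕜] K) :
    ‖u ∘L T ∘L v‖ ≤ ‖T‖ :=
  opNorm_le_bound _ (norm_nonneg T) fun x => by
    rw [comp_apply, comp_apply, norm_map_of_mem_unitary hu, ← norm_map_of_mem_unitary hv x]
    exact T.le_opNorm _

lemma norm_exp_neg_star_comp_comp_exp_star_le {A : H →L[𝕜] H} {B : K →L[𝕜] K}
    [IsStarNormal A] [IsStarNormal B] {V : H →L[𝕜] K} (hV : V ∘L A = B ∘L V) :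
    ‖exp (-star B) ∘L V ∘L exp (star A)‖ ≤ ‖V‖ := by
  let +nondep : NormedAlgebra ℚ (H →L[𝕜] H) := .restrictScalars ℚ 𝕜 _
  let +nondep : NormedAlgebra ℚ (K →L[𝕜] K) := .restrictScalars ℚ 𝕜 _
  have hUB := IsStarNormal.exp_neg_star_mul_exp_mem_unitary B
  have hUA := IsStarNormal.exp_neg_star_mul_exp_mem_unitary (star A)
  rw [star_star] at hUA
  calc ‖exp (-star B) ∘L V ∘L exp (star A)‖
      = ‖(exp (-star B) * exp B) ∘L V ∘L (exp (-A) * exp (star A))‖ := by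
        conv_lhs => rw [← exp_comp_comp_exp_neg hV]
        simp only [mul_def, comp_assoc]
    _ ≤ ‖V‖ := norm_comp_comp_le_of_mem_unitary hUB hUA V

end Hilbert

lemma smul_I_smul_star_eq_neg_star_smul {M : Type*} [AddCommGroup M] [StarAddMonoid M]
    [Module ℂ M] [StarModule ℂ M] (ζ : ℂ) (x : M) :
    ζ • (Complex.I • star x) = -star ((Complex.I * conj ζ) • x) := by
  rw [star_smul, smul_smul, ← neg_smul]
  congr 1
  simp only [star_mul', RCLike.star_def, Complex.conj_I, Complex.conj_conj, neg_mul, neg_neg]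
  ring

/-- **bounded Fuglede–Putnam, Rosenblum's proof ingredient.** For bounded normal
operators `N₁ ∈ B(H₁)`, `N₂ ∈ B(H₂)` and `V ∈ B(H₁,H₂)` with `V N₁ = N₂ V`, one has
`exp(i ζ̄ N₂) V exp(-i ζ̄ N₁) = V` for all `ζ ∈ ℂ`, and (after multiplying by `exp(i ζ N₂*)`
and `exp(-i ζ N₁*)`, the resulting entire bounded function being constant by Liouville's
theorem) `V N₁* = N₂* V`. -/
theorem fuglede_putnam_bounded
    {H₁ H₂ : Type*} [NormedAddCommGroup H₁] [InnerProductSpace ℂ H₁] [CompleteSpace H₁]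
    [NormedAddCommGroup H₂] [InnerProductSpace ℂ H₂] [CompleteSpace H₂]
    (N₁ : H₁ →L[ℂ] H₁) (N₂ : H₂ →L[ℂ] H₂)
    (hN₁ : IsStarNormal N₁) (hN₂ : IsStarNormal N₂)
    (V : H₁ →L[ℂ] H₂) (hV : V ∘L N₁ = N₂ ∘L V) :
    (∀ ζ : ℂ,
      NormedSpace.exp ((Complex.I * (starRingEnd ℂ) ζ) • N₂) ∘L V ∘L
        NormedSpace.exp ((-(Complex.I * (starRingEnd ℂ) ζ)) • N₁) = V) ∧
    V ∘L adjoint N₁ = adjoint N₂ ∘L V := by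
  have hV_smul (c : ℂ) : V ∘L (c • N₁) = (c • N₂) ∘L V := by rw [comp_smul, smul_comp, hV]
  refine ⟨fun ζ => by rw [neg_smul]; exact exp_comp_comp_exp_neg (hV_smul _), ?_⟩
  let g (ζ : ℂ) : H₁ →L[ℂ] H₂ :=
    exp (ζ • (Complex.I • adjoint N₂)) ∘L V ∘L exp (ζ • -(Complex.I • adjoint N₁))
  have hg_diff : Differentiable ℂ g :=
    (differentiable_exp_smul_const ℂ _).clm_comp
      ((differentiable_const V).clm_comp (differentiable_exp_smul_const ℂ _))
  have hg_bdd (ζ : ℂ) : ‖g ζ‖ ≤ ‖V‖ := by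
    simp only [g]
    rw [← star_eq_adjoint, ← star_eq_adjoint, smul_neg, smul_I_smul_star_eq_neg_star_smul,
      smul_I_smul_star_eq_neg_star_smul, neg_neg]
    exact norm_exp_neg_star_comp_comp_exp_star_le (hV_smul _)
  have hg_const (ζ : ℂ) : g ζ = V :=
    (hg_diff.apply_eq_apply_of_bounded (isBounded_iff_forall_norm_le.2
      ⟨‖V‖, Set.forall_mem_range.2 hg_bdd⟩) ζ 0).trans (by simp [g, exp_zero, one_def])
  have hI := comp_eq_comp_of_exp_smul_comp_comp_exp_smul_neg hg_const
  rw [comp_smul, smul_comp] at hI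
  exact smul_right_injective _ Complex.I_ne_zero hI
end

section
/- Let A ≥ 0 be self-adjoint and B densely defined closed in H with dom(B) ⊇ dom(A), so that ‖Bf‖ ≤ a‖Af‖ + b‖f‖ for all f ∈ dom(A) for some a, b ≥ 0. Then dom(|B|^{1/2}) ⊇ dom(A^{1/2}) and ‖|B|^{1/2}(A + I)^{-1/2}‖ ≤ (a + b)^{1/2}. -/
/-!
Write `R = (A + I)^{-1/2}`. Accretivity of `A` gives `‖A R² g‖, ‖R² g‖ ≤ ‖g‖`, so relative
boundedness makes `K = |B| R²` a bounded operator with `‖K‖ ≤ a + b`. Since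
`⟪R u, R (K v)⟫ = ⟪|B|^{1/2} R² u, |B|^{1/2} R² v⟫`, the moments `γ n = ⟪R x, R (Kⁿ x)⟫` are
alternately `‖R Kᵏ x‖²` and `‖|B|^{1/2} R² Kᵏ x‖²`; Cauchy–Schwarz makes them log-convex, and
they grow at most like `(a + b)ⁿ`, whence `γ 1 ≤ (a + b) γ 0`, i.e.
`‖|B|^{1/2} R² x‖² ≤ (a + b) ‖R x‖²`. As `R` is injective and self-adjoint it has dense range,
and closedness of `|B|^{1/2}` upgrades this to `‖|B|^{1/2} R g‖ ≤ √(a + b) ‖g‖` for all `g`.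
Finally `dom A^{1/2} ⊆ ran R`: for `f ∈ dom A^{1/2}` the functional `R y ↦ ⟪f, y⟫` is bounded
by `‖A^{1/2} f‖ + ‖f‖`, and its Riesz representative `g` satisfies `R g = f`.
-/

open Filter Topology RCLike
open scoped InnerProductSpace

/-- `M` is the modulus `|T| = (T* T)^{1/2}` of the densely defined closed operator `T`:
the unique nonnegative self-adjoint operator with `dom M = dom T` and `‖M f‖ = ‖T f‖`
for all `f` in this common domain. -/
structure IsModulusOf
    {H₁ H₂ : Type*} [NormedAddCommGroup H₁] [InnerProductSpace ℂ H₁] [CompleteSpace H₁]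
    [NormedAddCommGroup H₂] [InnerProductSpace ℂ H₂] [CompleteSpace H₂]
    (T : H₁ →ₗ.[ℂ] H₂) (M : H₁ →ₗ.[ℂ] H₁) : Prop where
  selfadj : IsSelfAdjoint M
  nonneg : ∀ (f : H₁) (hf : f ∈ M.domain), 0 ≤ (inner ℂ f (M ⟨f, hf⟩) : ℂ).re
  dom_eq : M.domain = T.domain
  norm_eq : ∀ (f : H₁) (hf : f ∈ M.domain) (hf' : f ∈ T.domain), ‖M ⟨f, hf⟩‖ = ‖T ⟨f, hf'⟩‖

/-- `S` is the nonnegative self-adjoint square root `R^{1/2}` of the nonnegative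
self-adjoint operator `R`:  `S` is nonnegative, self-adjoint, and `S ∘ S = R`
(including equality of the natural domains). -/
structure IsPosSqrtOf
    {H : Type*} [NormedAddCommGroup H] [InnerProductSpace ℂ H] [CompleteSpace H]
    (S R : H →ₗ.[ℂ] H) : Prop where
  selfadj : IsSelfAdjoint S
  nonneg : ∀ (f : H) (hf : f ∈ S.domain), 0 ≤ (inner ℂ f (S ⟨f, hf⟩) : ℂ).re
  dom_iff : ∀ f : H, f ∈ R.domain ↔ ∃ h : f ∈ S.domain, S ⟨f, h⟩ ∈ S.domain
  sq_eq : ∀ (f : H) (hR : f ∈ R.domain) (h : f ∈ S.domain) (h2 : S ⟨f, h⟩ ∈ S.domain),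
    R ⟨f, hR⟩ = S ⟨S ⟨f, h⟩, h2⟩

theorem le_of_forall_pow_succ_le_mul_pow_succ {x y C : ℝ} (hy : 0 ≤ y)
    (h : ∀ n : ℕ, x ^ (n + 1) ≤ C * y ^ (n + 1)) : x ≤ y := by
  by_contra! hyx
  rcases hy.eq_or_lt with rfl | hy
  · have := h 0
    simp only [zero_add, pow_one, mul_zero] at this
    linarith
  have hr : 1 < x / y := (one_lt_div hy).2 hyx
  obtain ⟨n, hn⟩ := pow_unbounded_of_one_lt C hr
  have := h n
  rw [← div_le_iff₀ (pow_pos hy (n + 1)), ← div_pow] at this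
  exact hn.not_ge ((pow_le_pow_right₀ hr.le n.le_succ).trans this)

theorem apply_one_le_mul_apply_zero_of_logConvex {γ : ℕ → ℝ} {c C : ℝ} (hc : 0 ≤ c)
    (hγ : ∀ n, 0 ≤ γ n) (hconv : ∀ n, γ (n + 1) ^ 2 ≤ γ n * γ (n + 2))
    (hgrowth : ∀ n, γ n ≤ C * c ^ n) : γ 1 ≤ c * γ 0 := by
  have ratio : ∀ n, γ 1 * γ n ≤ γ 0 * γ (n + 1) := by
    intro n
    induction n with
    | zero => rw [mul_comm]
    | succ n ih =>
      rcases (hγ (n + 1)).eq_or_lt with h0 | hpos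
      · rw [← h0, mul_zero]
        exact mul_nonneg (hγ 0) (hγ (n + 2))
      · refine le_of_mul_le_mul_right ?_ hpos
        nlinarith [mul_le_mul_of_nonneg_left (hconv n) (hγ 1),
          mul_le_mul_of_nonneg_right ih (hγ (n + 2))]
  have pow_le : ∀ n, γ 1 ^ (n + 1) ≤ γ 0 ^ n * γ (n + 1) := by
    intro n
    induction n with
    | zero => simp
    | succ n ih =>
      calc γ 1 ^ (n + 2) = γ 1 ^ (n + 1) * γ 1 := by ring
        _ ≤ γ 0 ^ n * (γ 1 * γ (n + 1)) := by
          nlinarith [mul_le_mul_of_nonneg_right ih (hγ 1)]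
        _ ≤ γ 0 ^ n * (γ 0 * γ (n + 2)) :=
          mul_le_mul_of_nonneg_left (ratio _) (pow_nonneg (hγ 0) n)
        _ = γ 0 ^ (n + 1) * γ (n + 2) := by ring
  rcases (hγ 0).eq_or_lt with h0 | h0
  · have := hconv 0
    rw [← h0, zero_mul, zero_add] at this
    rw [← h0, mul_zero]
    nlinarith [hγ 1]
  refine le_of_forall_pow_succ_le_mul_pow_succ (C := C / γ 0) (by positivity) fun n => ?_
  rw [div_mul_eq_mul_div, le_div_iff₀ h0]
  calc γ 1 ^ (n + 1) * γ 0 ≤ γ 0 ^ n * γ (n + 1) * γ 0 := by gcongr; exact pow_le n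
    _ ≤ γ 0 ^ n * (C * c ^ (n + 1)) * γ 0 := by gcongr; exact hgrowth _
    _ = C * (c * γ 0) ^ (n + 1) := by ring

section InnerProduct

variable {𝕜 E F G : Type*} [RCLike 𝕜] [NormedAddCommGroup F] [InnerProductSpace 𝕜 F]

theorem re_inner_sq_le_norm_sq_mul_norm_sq (u v : F) :
    re ⟪u, v⟫_𝕜 ^ 2 ≤ ‖u‖ ^ 2 * ‖v‖ ^ 2 := by
  rw [← mul_pow]
  exact sq_le_sq' (neg_le_of_abs_le ((abs_re_le_norm _).trans (norm_inner_le_norm u v)))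
    (re_inner_le_norm u v)

theorem norm_sq_add_norm_sq_le_norm_add_sq {w v : F} (h : 0 ≤ re ⟪v, w⟫_𝕜) :
    ‖w‖ ^ 2 + ‖v‖ ^ 2 ≤ ‖w + v‖ ^ 2 := by
  rw [norm_add_sq (𝕜 := 𝕜), inner_re_symm]
  linarith

theorem LinearPMap.norm_le_of_apply_add_eq {A : F →ₗ.[𝕜] F}
    (hA : ∀ (f : F) (hf : f ∈ A.domain), 0 ≤ re ⟪f, A ⟨f, hf⟩⟫_𝕜) {v : A.domain} {g : F}
    (hg : A v + v = g) : ‖A v‖ ≤ ‖g‖ ∧ ‖(v : F)‖ ≤ ‖g‖ := by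
  have := hg ▸ norm_sq_add_norm_sq_le_norm_add_sq (hA v v.2)
  constructor <;> nlinarith [norm_nonneg (A v), norm_nonneg (v : F), norm_nonneg g]

variable [NormedAddCommGroup E] [NormedSpace 𝕜 E] [NormedAddCommGroup G] [InnerProductSpace 𝕜 G]

theorem norm_sq_le_mul_norm_sq_of_inner_comp_eq (P : E →L[𝕜] F) (Q : E → G) (K : E → E)
    {c : ℝ} (hc : 0 ≤ c) (hK : ∀ u, ‖K u‖ ≤ c * ‖u‖)
    (hPQ : ∀ u v, ⟪P u, P (K v)⟫_𝕜 = ⟪Q u, Q v⟫_𝕜) (x : E) :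
    ‖Q x‖ ^ 2 ≤ c * ‖P x‖ ^ 2 := by
  have shift : ∀ u v, ⟪P (K u), P v⟫_𝕜 = ⟪P u, P (K v)⟫_𝕜 := fun u v => by
    rw [← inner_conj_symm, hPQ, inner_conj_symm, hPQ]
  have split : ∀ j k, ⟪P x, P (K^[j + k] x)⟫_𝕜 = ⟪P (K^[j] x), P (K^[k] x)⟫_𝕜 := by
    intro j
    induction j with
    | zero => simp
    | succ j ih =>
      intro k
      rw [show j + 1 + k = j + (k + 1) by omega, ih, Function.iterate_succ_apply',
        ← shift, ← Function.iterate_succ_apply' K j]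
  obtain ⟨γ, hγ⟩ : ∃ γ : ℕ → ℝ, ∀ n, γ n = re ⟪P x, P (K^[n] x)⟫_𝕜 := ⟨_, fun _ => rfl⟩
  have hγ_add : ∀ j k, γ (j + k) = re ⟪P (K^[j] x), P (K^[k] x)⟫_𝕜 := fun j k => by
    rw [hγ, split]
  have even : ∀ k, γ (k + k) = ‖P (K^[k] x)‖ ^ 2 := fun k => by
    rw [hγ_add, inner_self_eq_norm_sq]
  have odd : ∀ k, γ (k + (k + 1)) = ‖Q (K^[k] x)‖ ^ 2 := fun k => by
    rw [hγ_add, Function.iterate_succ_apply', hPQ, inner_self_eq_norm_sq]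
  have nonneg : ∀ n, 0 ≤ γ n := by
    intro n
    rcases Nat.even_or_odd' n with ⟨k, rfl | rfl⟩
    · rw [two_mul, even]; positivity
    · rw [show 2 * k + 1 = k + (k + 1) by ring, odd]; positivity
  have logConvex : ∀ n, γ (n + 1) ^ 2 ≤ γ n * γ (n + 2) := by
    intro n
    rcases Nat.even_or_odd' n with ⟨k, rfl | rfl⟩
    · rw [show 2 * k + 2 = (k + 1) + (k + 1) by ring, two_mul, even, even,
        show k + k + 1 = k + (k + 1) by ring, hγ_add]
      exact re_inner_sq_le_norm_sq_mul_norm_sq _ _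
    · rw [show 2 * k + 1 + 2 = (k + 1) + (k + 1 + 1) by ring, odd,
        show 2 * k + 1 = k + (k + 1) by ring, odd,
        show k + (k + 1) + 1 = k + (k + 1 + 1) by ring, hγ_add,
        Function.iterate_succ_apply' K (k + 1), hPQ]
      exact re_inner_sq_le_norm_sq_mul_norm_sq _ _
  have growth : ∀ n, γ n ≤ (‖P x‖ * ‖P‖ * ‖x‖) * c ^ n := by
    have iterate_le : ∀ n, ‖K^[n] x‖ ≤ c ^ n * ‖x‖ := by
      intro n
      induction n with
      | zero => simp
      | succ n ih =>
        rw [Function.iterate_succ_apply', pow_succ']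
        exact (hK _).trans (by rw [mul_assoc]; gcongr)
    intro n
    calc γ n ≤ ‖P x‖ * ‖P (K^[n] x)‖ := (hγ n).trans_le (re_inner_le_norm _ _)
      _ ≤ ‖P x‖ * (‖P‖ * (c ^ n * ‖x‖)) := by
        gcongr; exact P.le_opNorm_of_le (iterate_le n)
      _ = _ := by ring
  simpa [even 0, odd 0] using apply_one_le_mul_apply_zero_of_logConvex hc nonneg logConvex growth

end InnerProduct

section Adjoint

variable {𝕜 E F : Type*} [RCLike 𝕜] [NormedAddCommGroup E] [InnerProductSpace 𝕜 E]
  [NormedAddCommGroup F] [InnerProductSpace 𝕜 F] [CompleteSpace E] [CompleteSpace F]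

theorem IsSelfAdjoint.inner_apply_eq {T : E →L[𝕜] E} (hT : IsSelfAdjoint T) (x y : E) :
    ⟪T x, y⟫_𝕜 = ⟪x, T y⟫_𝕜 :=
  hT.isSymmetric x y

theorem ContinuousLinearMap.mem_range_adjoint_of_norm_inner_le (T : E →L[𝕜] F) {x : E} {C : ℝ}
    (h : ∀ y, ‖⟪x, y⟫_𝕜‖ ≤ C * ‖T y‖) : x ∈ Set.range (adjoint T) := by
  let T' : E →ₗ[𝕜] F := T
  have hker : LinearMap.ker T' ≤ LinearMap.ker (innerₛₗ 𝕜 x) := fun y hy => by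
    have := h y
    rwa [show T y = 0 from hy, norm_zero, mul_zero, norm_le_zero_iff] at this
  let φ : LinearMap.range T' →ₗ[𝕜] 𝕜 :=
    ((LinearMap.ker T').liftQ (innerₛₗ 𝕜 x) hker).comp T'.quotKerEquivRange.symm.toLinearMap
  have hφ : ∀ y, φ ⟨T' y, LinearMap.mem_range_self T' y⟩ = ⟪x, y⟫_𝕜 := fun y => by
    simp only [φ, LinearMap.comp_apply, LinearEquiv.coe_coe]
    rw [LinearMap.quotKerEquivRange_symm_apply_image]
    rfl
  have hφ_le : ∀ z, ‖φ z‖ ≤ C * ‖z‖ := by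
    rintro ⟨_, y, rfl⟩
    exact (congrArg norm (hφ y)).trans_le (h y)
  obtain ⟨g, hg, -⟩ := exists_extension_norm_eq _ (φ.mkContinuous C hφ_le)
  refine ⟨(InnerProductSpace.toDual 𝕜 F).symm g, ext_inner_right 𝕜 fun y => ?_⟩
  rw [adjoint_inner_left, InnerProductSpace.toDual_symm_apply, ← hφ,
    ← LinearMap.mkContinuous_apply]
  exact hg ⟨T' y, LinearMap.mem_range_self T' y⟩

theorem ContinuousLinearMap.denseRange_of_injective_adjoint {T : E →L[𝕜] F}
    (hT : Function.Injective (adjoint T)) : DenseRange T := by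
  have h := (adjoint T).orthogonal_ker
  rw [adjoint_adjoint, LinearMap.ker_eq_bot.2 hT, Submodule.bot_orthogonal_eq_top] at h
  exact Submodule.dense_iff_topologicalClosure_eq_top.2 h.symm

theorem IsSelfAdjoint.isFormalAdjoint_self {S : E →ₗ.[𝕜] E} (hS : IsSelfAdjoint S) :
    S.IsFormalAdjoint S := by
  have h := LinearPMap.adjoint_isFormalAdjoint hS.dense_domain
  rwa [LinearPMap.isSelfAdjoint_def.mp hS] at h

end Adjoint

theorem LinearPMap.IsClosed.exists_mem_domain_norm_le_of_denseRange {𝕜 E F G G' : Type*}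
    [RCLike 𝕜] [NormedAddCommGroup E] [NormedSpace 𝕜 E] [NormedAddCommGroup F]
    [NormedSpace 𝕜 F] [CompleteSpace F] [NormedAddCommGroup G] [NormedSpace 𝕜 G]
    [NormedAddCommGroup G'] [NormedSpace 𝕜 G'] {S : E →ₗ.[𝕜] F} (hS : S.IsClosed)
    (L : G →L[𝕜] E) {J : G' →L[𝕜] G} (hJ : DenseRange J) {C : ℝ}
    (hL : ∀ x, ∃ h : L (J x) ∈ S.domain, ‖S ⟨L (J x), h⟩‖ ≤ C * ‖J x‖) (g : G) :
    ∃ h : L g ∈ S.domain, ‖S ⟨L g, h⟩‖ ≤ C * ‖g‖ := by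
  obtain ⟨d, hd_mem, hd⟩ := mem_closure_iff_seq_limit.1 (hJ g)
  choose x hx using hd_mem
  obtain rfl : d = fun n => J (x n) := funext fun n => (hx n).symm
  set s : ℕ → F := fun n => S ⟨L (J (x n)), (hL (x n)).1⟩
  have hs_sub : ∀ m n, ‖s m - s n‖ ≤ C * ‖J (x m) - J (x n)‖ := fun m n => by
    obtain ⟨h, hle⟩ := hL (x m - x n)
    rw [← LinearPMap.map_sub, ← _root_.map_sub J]
    convert hle using 4
    simp
  have hs : CauchySeq s := by
    obtain ⟨b, hb0, hb, hblim⟩ := cauchySeq_iff_le_tendsto_0.1 hd.cauchySeq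
    refine cauchySeq_iff_le_tendsto_0.2 ⟨fun n => |C| * b n,
      fun n => mul_nonneg (abs_nonneg C) (hb0 n), fun m n N hm hn => ?_,
      by simpa using hblim.const_mul |C|⟩
    calc dist (s m) (s n) ≤ C * ‖J (x m) - J (x n)‖ := (dist_eq_norm _ _).trans_le (hs_sub m n)
      _ ≤ |C| * ‖J (x m) - J (x n)‖ := by gcongr; exact le_abs_self C
      _ ≤ |C| * b N := by gcongr; simpa [dist_eq_norm] using hb m n N hm hn
  obtain ⟨y, hy⟩ := cauchySeq_tendsto_of_complete hs
  have hgraph : (L g, y) ∈ S.graph := by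
    refine hS.mem_of_tendsto (((L.continuous.tendsto g).comp hd).prodMk_nhds hy) ?_
    exact Eventually.of_forall fun n => S.mem_graph ⟨L (J (x n)), (hL (x n)).1⟩
  obtain ⟨⟨_, h⟩, rfl, hSy⟩ := (mem_graph_iff S).1 hgraph
  exact ⟨h, hSy ▸ le_of_tendsto_of_tendsto' hy.norm (hd.norm.const_mul C) fun n => (hL (x n)).2⟩

namespace IsPosSqrtOf

variable {H : Type*} [NormedAddCommGroup H] [InnerProductSpace ℂ H] [CompleteSpace H]
  {S T : H →ₗ.[ℂ] H}

theorem domain_le (h : IsPosSqrtOf S T) : T.domain ≤ S.domain :=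
  fun f hf => ((h.dom_iff f).1 hf).1

theorem inner_apply_eq (h : IsPosSqrtOf S T) {u v : H} (hu : u ∈ S.domain)
    (hv : v ∈ T.domain) (hv' : v ∈ S.domain) :
    ⟪u, T ⟨v, hv⟩⟫_ℂ = ⟪S ⟨u, hu⟩, S ⟨v, hv'⟩⟫_ℂ := by
  obtain ⟨_, hSv⟩ := (h.dom_iff v).1 hv
  rw [h.sq_eq v hv hv' hSv]
  exact (h.selfadj.isFormalAdjoint_self ⟨u, hu⟩ ⟨_, hSv⟩).symm

theorem norm_sq_apply_apply_le (h : IsPosSqrtOf S T) {R : H →L[ℂ] H} (hR : IsSelfAdjoint R)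
    (hRT : ∀ u, R (R u) ∈ T.domain) {c : ℝ} (hc : 0 ≤ c)
    (hTR : ∀ u, ‖T ⟨R (R u), hRT u⟩‖ ≤ c * ‖u‖) (x : H) :
    ‖S ⟨R (R x), h.domain_le (hRT x)⟩‖ ^ 2 ≤ c * ‖R x‖ ^ 2 := by
  refine norm_sq_le_mul_norm_sq_of_inner_comp_eq R (fun u => S ⟨R (R u), h.domain_le (hRT u)⟩)
    (fun u => T ⟨R (R u), hRT u⟩) hc hTR (fun u v => ?_) x
  rw [← hR.inner_apply_eq]
  exact h.inner_apply_eq _ _ _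

theorem mem_range_of_mem_domain {A : H →ₗ.[ℂ] H} (hSA : IsPosSqrtOf S A) {R : H →L[ℂ] H}
    (hR : IsSelfAdjoint R)
    (hRA : ∀ g, ∃ h : R (R g) ∈ A.domain, A ⟨R (R g), h⟩ + R (R g) = g) {f : H}
    (hf : f ∈ S.domain) : f ∈ Set.range R := by
  rw [← hR.adjoint_eq]
  refine R.mem_range_adjoint_of_norm_inner_le (C := ‖S ⟨f, hf⟩‖ + ‖f‖) fun y => ?_
  obtain ⟨hv, hAv⟩ := hRA y
  have hv' := hSA.domain_le hv
  have hgraph : ‖S ⟨R (R y), hv'⟩‖ ^ 2 + ‖R (R y)‖ ^ 2 = ‖R y‖ ^ 2 := by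
    have : ‖R y‖ ^ 2 = re ⟪A ⟨R (R y), hv⟩ + R (R y), R (R y)⟫_ℂ := by
      rw [hAv, ← inner_self_eq_norm_sq (𝕜 := ℂ), hR.inner_apply_eq]
    rw [this, inner_add_left, map_add, inner_re_symm, hSA.inner_apply_eq hv' hv hv',
      inner_self_eq_norm_sq, inner_self_eq_norm_sq]
  calc ‖⟪f, y⟫_ℂ‖ = ‖⟪S ⟨f, hf⟩, S ⟨R (R y), hv'⟩⟫_ℂ + ⟪f, R (R y)⟫_ℂ‖ := by
        rw [← hSA.inner_apply_eq hf hv hv', ← inner_add_right, hAv]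
    _ ≤ ‖S ⟨f, hf⟩‖ * ‖S ⟨R (R y), hv'⟩‖ + ‖f‖ * ‖R (R y)‖ :=
        (norm_add_le _ _).trans (add_le_add (norm_inner_le_norm _ _) (norm_inner_le_norm _ _))
    _ ≤ ‖S ⟨f, hf⟩‖ * ‖R y‖ + ‖f‖ * ‖R y‖ := by
        gcongr <;> nlinarith [norm_nonneg (S ⟨R (R y), hv'⟩), norm_nonneg (R y),
          norm_nonneg (R (R y))]
    _ = (‖S ⟨f, hf⟩‖ + ‖f‖) * ‖R y‖ := by ring

end IsPosSqrtOf

/-- Here `Rhalf = (A + I)^{-1/2}`, `SA = A^{1/2}` and `SB = |B|^{1/2}`. -/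
theorem rel_bounded_implies_form_bounded_general
    {H : Type*} [NormedAddCommGroup H] [InnerProductSpace ℂ H] [CompleteSpace H]
    (A : H →ₗ.[ℂ] H)
    (hAnn : ∀ (f : H) (hf : f ∈ A.domain), 0 ≤ (inner ℂ f (A ⟨f, hf⟩) : ℂ).re)
    (B : H →ₗ.[ℂ] H)
    (hdom : A.domain ≤ B.domain)
    (a b : ℝ) (ha : 0 ≤ a) (hb : 0 ≤ b)
    (hbound : ∀ (f : H) (hf : f ∈ A.domain),
      ‖B ⟨f, hdom hf⟩‖ ≤ a * ‖A ⟨f, hf⟩‖ + b * ‖f‖)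
    (modB : H →ₗ.[ℂ] H) (hmodB : IsModulusOf B modB)
    (SA SB : H →ₗ.[ℂ] H) (hSA : IsPosSqrtOf SA A) (hSB : IsPosSqrtOf SB modB)
    (Rhalf : H →L[ℂ] H) (hRsa : IsSelfAdjoint Rhalf)
    (hRsq : ∀ g : H, ∃ h : Rhalf (Rhalf g) ∈ A.domain,
      A ⟨Rhalf (Rhalf g), h⟩ + Rhalf (Rhalf g) = g) :
    SA.domain ≤ SB.domain ∧
    ∀ g : H, ∃ h : Rhalf g ∈ SB.domain,
      ‖SB ⟨Rhalf g, h⟩‖ ≤ Real.sqrt (a + b) * ‖g‖ := by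
  have hAR : ∀ g, ‖A ⟨_, (hRsq g).1⟩‖ ≤ ‖g‖ ∧ ‖Rhalf (Rhalf g)‖ ≤ ‖g‖ := fun g =>
    A.norm_le_of_apply_add_eq hAnn (hRsq g).2
  have hRM : ∀ u, Rhalf (Rhalf u) ∈ modB.domain := fun u => hmodB.dom_eq ▸ hdom (hRsq u).1
  have hMR : ∀ u, ‖modB ⟨_, hRM u⟩‖ ≤ (a + b) * ‖u‖ := fun u => by
    rw [hmodB.norm_eq _ _ (hdom (hRsq u).1)]
    calc _ ≤ a * ‖A ⟨_, (hRsq u).1⟩‖ + b * ‖Rhalf (Rhalf u)‖ := hbound _ _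
      _ ≤ a * ‖u‖ + b * ‖u‖ := by gcongr; exacts [(hAR u).1, (hAR u).2]
      _ = (a + b) * ‖u‖ := by ring
  have hSBR : ∀ x, ∃ h : Rhalf (Rhalf x) ∈ SB.domain,
      ‖SB ⟨_, h⟩‖ ≤ Real.sqrt (a + b) * ‖Rhalf x‖ := fun x => by
    refine ⟨hSB.domain_le (hRM x), ?_⟩
    rw [← Real.sqrt_sq (norm_nonneg _), ← Real.sqrt_sq (norm_nonneg (Rhalf x)),
      ← Real.sqrt_mul (by positivity)]
    exact Real.sqrt_le_sqrt (hSB.norm_sq_apply_apply_le hRsa hRM (by positivity) hMR x)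
  have hinj : Function.Injective (ContinuousLinearMap.adjoint Rhalf) := by
    rw [hRsa.adjoint_eq, injective_iff_map_eq_zero]
    intro x hx
    obtain ⟨h, hAx⟩ := hRsq x
    have h0 : (⟨_, h⟩ : A.domain) = 0 := Subtype.ext (by simp [hx])
    rw [← hAx, h0, LinearPMap.map_zero, zero_add, hx, map_zero]
  have hbounded := hSB.selfadj.isClosed.exists_mem_domain_norm_le_of_denseRange Rhalf
    (Rhalf.denseRange_of_injective_adjoint hinj) hSBR
  refine ⟨fun f hf => ?_, hbounded⟩
  obtain ⟨g, rfl⟩ := hSA.mem_range_of_mem_domain hRsa hRsq hf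
  exact (hbounded g).1

/-- Let `A ≥ 0` be self-adjoint and `B` densely defined closed in `H` with
`dom B ⊇ dom A`, so that `‖B f‖ ≤ a ‖A f‖ + b ‖f‖` for all `f ∈ dom A` for some `a, b ≥ 0`.
Then `dom |B|^{1/2} ⊇ dom A^{1/2}` and `‖ |B|^{1/2} (A + I)^{-1/2} ‖ ≤ (a + b)^{1/2}`.
Here `Rhalf` denotes the bounded operator `(A + I)^{-1/2}` (the nonnegative self-adjoint
square root of `(A + I)⁻¹`), `SA = A^{1/2}` and `SB = |B|^{1/2}`. -/
theorem rel_bounded_implies_form_bounded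
    {H : Type*} [NormedAddCommGroup H] [InnerProductSpace ℂ H] [CompleteSpace H]
    (A : H →ₗ.[ℂ] H) (hAsa : IsSelfAdjoint A)
    (hAnn : ∀ (f : H) (hf : f ∈ A.domain), 0 ≤ (inner ℂ f (A ⟨f, hf⟩) : ℂ).re)
    (B : H →ₗ.[ℂ] H) (hBdense : Dense (B.domain : Set H)) (hBclosed : B.IsClosed)
    (hdom : A.domain ≤ B.domain)
    (a b : ℝ) (ha : 0 ≤ a) (hb : 0 ≤ b)
    (hbound : ∀ (f : H) (hf : f ∈ A.domain),
      ‖B ⟨f, hdom hf⟩‖ ≤ a * ‖A ⟨f, hf⟩‖ + b * ‖f‖)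
    (modB : H →ₗ.[ℂ] H) (hmodB : IsModulusOf B modB)
    (SA SB : H →ₗ.[ℂ] H) (hSA : IsPosSqrtOf SA A) (hSB : IsPosSqrtOf SB modB)
    (Rhalf : H →L[ℂ] H) (hRsa : IsSelfAdjoint Rhalf)
    (hRnn : ∀ g : H, 0 ≤ (inner ℂ g (Rhalf g) : ℂ).re)
    (hRsq : ∀ g : H, ∃ h : Rhalf (Rhalf g) ∈ A.domain,
      A ⟨Rhalf (Rhalf g), h⟩ + Rhalf (Rhalf g) = g)
    (hRinv : ∀ (f : H) (hf : f ∈ A.domain), Rhalf (Rhalf (A ⟨f, hf⟩ + f)) = f) :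
    SA.domain ≤ SB.domain ∧
    ∀ g : H, ∃ h : Rhalf g ∈ SB.domain,
      ‖SB ⟨Rhalf g, h⟩‖ ≤ Real.sqrt (a + b) * ‖g‖ :=
  rel_bounded_implies_form_bounded_general A hAnn B hdom a b ha hb hbound modB hmodB SA SB hSA hSB
    Rhalf hRsa hRsq
end

section
/- Let A ≥ 0 be self-adjoint and B densely defined closed with dom(B) ∩ dom(B*) ⊇ dom(A), and let a,b (resp. a*,b*) be relative bounds for B (resp. B*) with respect to A. Then the operator (A + I)^{-1/2} B (A + I)^{-1/2} is bounded on its domain with closure of norm at most (a* + b*)^{1/2}(a + b)^{1/2}. -/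
/-!
Write `R = (A + I)^{-1/2}`. Since `A ≥ 0`, both `‖A f‖` and `‖f‖` are at most `‖(A + I) f‖`, so
`T = B R²` and `S = B* R²` are bounded by `a + b` and `a* + b*`, and `R` is a contraction; moreover
`⟪T u, R² v⟫ = ⟪R² u, S v⟫`. Apply `S` and `T` alternately to `y₀ = B R g` and put `c₀ = ‖g‖`,
`c_{n+1} = ‖R y_n‖`. The weighted adjointness gives `c_{n+1}² ≤ c_n c_{n+2}`, hence
`c₁^{n+1} ≤ c₀^n c_{n+1}`, while `c_{2k+1} ≤ ((a + b)(a* + b*))^k ‖y₀‖`. Taking `(2k+1)`-th roots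
and letting `k → ∞` gives `c₁ ≤ √(a* + b*) √(a + b) c₀`.
-/

open RCLike
open scoped InnerProductSpace

theorem pow_succ_le_pow_mul_of_sq_le_mul {c : ℕ → ℝ} (hc : ∀ n, 0 ≤ c n)
    (hlc : ∀ n, c (n + 1) ^ 2 ≤ c n * c (n + 2)) (n : ℕ) :
    c 1 ^ (n + 1) ≤ c 0 ^ n * c (n + 1) := by
  have ratio : ∀ n, c 1 * c n ≤ c 0 * c (n + 1) := by
    intro n
    induction n with
    | zero => rw [mul_comm]
    | succ n ih =>
      rcases (hc (n + 1)).eq_or_lt with h0 | h0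
      · rw [← h0, mul_zero]
        exact mul_nonneg (hc 0) (hc (n + 2))
      · refine le_of_mul_le_mul_right ?_ h0
        calc c 1 * c (n + 1) * c (n + 1) = c 1 * c (n + 1) ^ 2 := by ring
          _ ≤ c 1 * (c n * c (n + 2)) := by gcongr; exacts [hc 1, hlc n]
          _ = c 1 * c n * c (n + 2) := by ring
          _ ≤ c 0 * c (n + 1) * c (n + 2) := by gcongr; exact hc _
          _ = c 0 * c (n + 2) * c (n + 1) := by ring
  induction n with
  | zero => simp
  | succ n ih =>
    calc c 1 ^ (n + 2) = c 1 ^ (n + 1) * c 1 := pow_succ _ _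
      _ ≤ c 0 ^ n * c (n + 1) * c 1 := by gcongr; exact hc 1
      _ = c 0 ^ n * (c 1 * c (n + 1)) := by ring
      _ ≤ c 0 ^ n * (c 0 * c (n + 2)) :=
          mul_le_mul_of_nonneg_left (ratio _) (pow_nonneg (hc 0) n)
      _ = c 0 ^ (n + 1) * c (n + 2) := by ring

theorem le_of_forall_pow_le_pow_mul {p q D : ℝ} (hq : 0 ≤ q)
    (h : ∀ k : ℕ, p ^ (2 * k + 1) ≤ q ^ (2 * k) * D) : p ≤ q := by
  by_contra! hqp
  have hp : 0 < p := hq.trans_lt hqp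
  rcases hq.eq_or_lt with rfl | hq
  · have h1 := h 1
    have h0 := h 0
    norm_num at h0 h1
    nlinarith [pow_pos hp 3]
  · have hr : 1 < p / q := (one_lt_div hq).2 hqp
    obtain ⟨n, hn⟩ := pow_unbounded_of_one_lt (D / q) hr
    have : (p / q) ^ (2 * n + 1) ≤ D / q := by
      rw [div_pow, div_le_div_iff₀ (pow_pos hq _) hq, pow_succ q]
      nlinarith [h n, pow_pos hq (2 * n)]
    exact hn.not_ge ((pow_le_pow_right₀ hr.le (by omega)).trans this)

/-- The sequence `y, S y, T (S y), S (T (S y)), …`. -/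
def alternatingOrbit {α : Type*} (S T : α → α) : α → ℕ → α
  | y, 0 => y
  | y, n + 1 => alternatingOrbit T S (S y) n

section InnerProduct

variable {𝕜 H : Type*} [RCLike 𝕜] [NormedAddCommGroup H] [InnerProductSpace 𝕜 H]

theorem norm_le_norm_add_of_re_inner_nonneg {v w : H} (h : 0 ≤ re ⟪v, w⟫_𝕜) :
    ‖v‖ ≤ ‖v + w‖ := by
  refine le_of_pow_le_pow_left₀ two_ne_zero (norm_nonneg _) ?_
  rw [norm_add_sq (𝕜 := 𝕜)]
  nlinarith [norm_nonneg w]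

theorem LinearPMap.norm_le_norm_apply_add {A : H →ₗ.[𝕜] H}
    (hA : ∀ f (hf : f ∈ A.domain), 0 ≤ re ⟪f, A ⟨f, hf⟩⟫_𝕜) (f : H) (hf : f ∈ A.domain) :
    ‖f‖ ≤ ‖A ⟨f, hf⟩ + f‖ :=
  add_comm f (A ⟨f, hf⟩) ▸ norm_le_norm_add_of_re_inner_nonneg (hA f hf)

theorem LinearPMap.norm_apply_le_of_relative_bound {F : Type*} [NormedAddCommGroup F]
    [NormedSpace 𝕜 F] {A : H →ₗ.[𝕜] H} (hA : ∀ f (hf : f ∈ A.domain), 0 ≤ re ⟪f, A ⟨f, hf⟩⟫_𝕜)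
    {B : H →ₗ.[𝕜] F} (hdom : A.domain ≤ B.domain) {a b : ℝ} (ha : 0 ≤ a) (hb : 0 ≤ b)
    (hbound : ∀ f (hf : f ∈ A.domain), ‖B ⟨f, hdom hf⟩‖ ≤ a * ‖A ⟨f, hf⟩‖ + b * ‖f‖)
    (f : H) (hf : f ∈ A.domain) : ‖B ⟨f, hdom hf⟩‖ ≤ (a + b) * ‖A ⟨f, hf⟩ + f‖ := by
  have hf' : 0 ≤ re ⟪A ⟨f, hf⟩, f⟫_𝕜 := inner_re_symm (𝕜 := 𝕜) f _ ▸ hA f hf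
  have hAf : ‖A ⟨f, hf⟩‖ ≤ ‖A ⟨f, hf⟩ + f‖ := norm_le_norm_add_of_re_inner_nonneg hf'
  have hff : ‖f‖ ≤ ‖A ⟨f, hf⟩ + f‖ := A.norm_le_norm_apply_add hA f hf
  calc ‖B ⟨f, hdom hf⟩‖ ≤ a * ‖A ⟨f, hf⟩‖ + b * ‖f‖ := hbound f hf
    _ ≤ a * ‖A ⟨f, hf⟩ + f‖ + b * ‖A ⟨f, hf⟩ + f‖ := by gcongr
    _ = (a + b) * ‖A ⟨f, hf⟩ + f‖ := by ring

theorem norm_alternatingOrbit_two_mul_le {S T : H → H} {α β : ℝ} (hα : 0 ≤ α) (hβ : 0 ≤ β)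
    (hT : ∀ u, ‖T u‖ ≤ α * ‖u‖) (hS : ∀ u, ‖S u‖ ≤ β * ‖u‖) (k : ℕ) (y : H) :
    ‖alternatingOrbit S T y (2 * k)‖ ≤ (α * β) ^ k * ‖y‖ := by
  induction k generalizing y with
  | zero => simp [alternatingOrbit]
  | succ k ih =>
    have hTS : ‖T (S y)‖ ≤ α * β * ‖y‖ := by
      rw [mul_assoc]
      exact (hT _).trans (mul_le_mul_of_nonneg_left (hS y) hα)
    calc ‖alternatingOrbit S T y (2 * (k + 1))‖ = ‖alternatingOrbit S T (T (S y)) (2 * k)‖ := rfl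
      _ ≤ (α * β) ^ k * (α * β * ‖y‖) :=
        (ih _).trans (mul_le_mul_of_nonneg_left hTS (pow_nonneg (mul_nonneg hα hβ) k))
      _ = (α * β) ^ (k + 1) * ‖y‖ := by ring

theorem inner_alternatingOrbit_succ {S T J : H → H}
    (hST : ∀ u v, ⟪S u, J v⟫_𝕜 = ⟪J u, T v⟫_𝕜) (hTS : ∀ u v, ⟪T u, J v⟫_𝕜 = ⟪J u, S v⟫_𝕜)
    (y : H) (n : ℕ) :
    ⟪alternatingOrbit S T y (n + 1), J (alternatingOrbit S T y (n + 1))⟫_𝕜 =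
      ⟪J (alternatingOrbit S T y n), alternatingOrbit S T y (n + 2)⟫_𝕜 := by
  induction n generalizing S T y with
  | zero => exact hST y (S y)
  | succ n ih => exact ih hTS hST (S y)

variable [CompleteSpace H]

theorem IsSelfAdjoint.norm_apply_sq {R : H →L[𝕜] H} (hR : IsSelfAdjoint R) (x : H) :
    ‖R x‖ ^ 2 = re ⟪x, R (R x)⟫_𝕜 := by
  rw [← inner_self_eq_norm_sq (𝕜 := 𝕜)]
  exact congrArg re (hR.isSymmetric x (R x))

theorem IsSelfAdjoint.norm_apply_le_of_norm_apply_apply_le {R : H →L[𝕜] H}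
    (hR : IsSelfAdjoint R) (h : ∀ x, ‖R (R x)‖ ≤ ‖x‖) (x : H) : ‖R x‖ ≤ ‖x‖ := by
  refine le_of_pow_le_pow_left₀ two_ne_zero (norm_nonneg _) ?_
  calc ‖R x‖ ^ 2 = re ⟪x, R (R x)⟫_𝕜 := hR.norm_apply_sq x
    _ ≤ ‖x‖ * ‖R (R x)‖ := re_inner_le_norm x _
    _ ≤ ‖x‖ ^ 2 := by nlinarith [h x, norm_nonneg x]

theorem IsSelfAdjoint.norm_apply_le_of_weighted_adjoint {R : H →L[𝕜] H} (hR : IsSelfAdjoint R)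
    (hRc : ∀ x, ‖R x‖ ≤ ‖x‖) {S T : H → H} {α β : ℝ} (hα : 0 ≤ α) (hβ : 0 ≤ β)
    (hT : ∀ u, ‖T u‖ ≤ α * ‖u‖) (hS : ∀ u, ‖S u‖ ≤ β * ‖u‖)
    (hTS : ∀ u v, ⟪T u, R (R v)⟫_𝕜 = ⟪R (R u), S v⟫_𝕜)
    {g y : H} (hy : ∀ v, ⟪y, R (R v)⟫_𝕜 = ⟪R g, S v⟫_𝕜) :
    ‖R y‖ ≤ √β * √α * ‖g‖ := by
  have hST : ∀ u v, ⟪S u, R (R v)⟫_𝕜 = ⟪R (R u), T v⟫_𝕜 := fun u v => by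
    rw [← inner_conj_symm, ← hTS v u, inner_conj_symm]
  have hRsymm : ∀ u v, ⟪R u, v⟫_𝕜 = ⟪u, R v⟫_𝕜 := hR.isSymmetric
  set x := alternatingOrbit S T y
  let c : ℕ → ℝ := fun | 0 => ‖g‖ | n + 1 => ‖R (x n)‖
  have hc : ∀ n, 0 ≤ c n := by rintro (_ | _) <;> exact norm_nonneg _
  have hlc : ∀ n, c (n + 1) ^ 2 ≤ c n * c (n + 2) := by
    rintro (_ | n)
    · calc ‖R y‖ ^ 2 = re ⟪y, R (R y)⟫_𝕜 := hR.norm_apply_sq y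
        _ = re ⟪g, R (S y)⟫_𝕜 := by rw [hy, hRsymm]
        _ ≤ ‖g‖ * ‖R (S y)‖ := re_inner_le_norm _ _
    · calc ‖R (x (n + 1))‖ ^ 2 = re ⟪x (n + 1), R (R (x (n + 1)))⟫_𝕜 := hR.norm_apply_sq _
        _ = re ⟪R (x n), R (x (n + 2))⟫_𝕜 := by
          rw [inner_alternatingOrbit_succ (J := fun v => R (R v)) hST hTS, hRsymm]
        _ ≤ ‖R (x n)‖ * ‖R (x (n + 2))‖ := re_inner_le_norm _ _
  have hodd : ∀ k, c (2 * k + 1) ≤ (√β * √α) ^ (2 * k) * ‖y‖ := fun k =>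
    calc ‖R (x (2 * k))‖ ≤ ‖x (2 * k)‖ := hRc _
      _ ≤ (α * β) ^ k * ‖y‖ := norm_alternatingOrbit_two_mul_le hα hβ hT hS k y
      _ = (√β * √α) ^ (2 * k) * ‖y‖ := by
        rw [pow_mul, mul_pow √β, Real.sq_sqrt hα, Real.sq_sqrt hβ, mul_comm β]
  change c 1 ≤ √β * √α * c 0
  refine le_of_forall_pow_le_pow_mul (D := ‖y‖) (by positivity) fun k => ?_
  calc c 1 ^ (2 * k + 1) ≤ c 0 ^ (2 * k) * c (2 * k + 1) :=
        pow_succ_le_pow_mul_of_sq_le_mul hc hlc (2 * k)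
    _ ≤ ‖g‖ ^ (2 * k) * ((√β * √α) ^ (2 * k) * ‖y‖) := by gcongr; exact hodd k
    _ = (√β * √α * ‖g‖) ^ (2 * k) * ‖y‖ := by ring

end InnerProduct

theorem sandwiched_operator_bounded_general
    {H : Type*} [NormedAddCommGroup H] [InnerProductSpace ℂ H] [CompleteSpace H]
    (A : H →ₗ.[ℂ] H)
    (hAnn : ∀ (f : H) (hf : f ∈ A.domain), 0 ≤ (inner ℂ f (A ⟨f, hf⟩) : ℂ).re)
    (B : H →ₗ.[ℂ] H) (hBdense : Dense (B.domain : Set H))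
    (hdom : A.domain ≤ B.domain) (hdom' : A.domain ≤ B.adjoint.domain)
    (a b astar bstar : ℝ) (ha : 0 ≤ a) (hb : 0 ≤ b) (ha' : 0 ≤ astar) (hb' : 0 ≤ bstar)
    (hbound : ∀ (f : H) (hf : f ∈ A.domain),
      ‖B ⟨f, hdom hf⟩‖ ≤ a * ‖A ⟨f, hf⟩‖ + b * ‖f‖)
    (hbound' : ∀ (f : H) (hf : f ∈ A.domain),
      ‖B.adjoint ⟨f, hdom' hf⟩‖ ≤ astar * ‖A ⟨f, hf⟩‖ + bstar * ‖f‖)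
    (Rhalf : H →L[ℂ] H) (hRsa : IsSelfAdjoint Rhalf)
    (hRsq : ∀ g : H, ∃ h : Rhalf (Rhalf g) ∈ A.domain,
      A ⟨Rhalf (Rhalf g), h⟩ + Rhalf (Rhalf g) = g) :
    ∀ (g : H) (h : Rhalf g ∈ B.domain),
      ‖Rhalf (B ⟨Rhalf g, h⟩)‖ ≤ Real.sqrt (astar + bstar) * Real.sqrt (a + b) * ‖g‖ := by
  intro g hg
  have hmem (y : H) : Rhalf (Rhalf y) ∈ A.domain := (hRsq y).fst
  have hresolvent (y : H) : A ⟨Rhalf (Rhalf y), hmem y⟩ + Rhalf (Rhalf y) = y := (hRsq y).snd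
  have hcontr : ∀ x, ‖Rhalf x‖ ≤ ‖x‖ := hRsa.norm_apply_le_of_norm_apply_apply_le fun x => by
    simpa only [hresolvent] using A.norm_le_norm_apply_add hAnn _ (hmem x)
  have hadj := (LinearPMap.adjoint_isFormalAdjoint hBdense).symm
  refine hRsa.norm_apply_le_of_weighted_adjoint hcontr (add_nonneg ha hb) (add_nonneg ha' hb')
    (T := fun y => B ⟨Rhalf (Rhalf y), hdom (hmem y)⟩)
    (S := fun y => B.adjoint ⟨Rhalf (Rhalf y), hdom' (hmem y)⟩)
    (fun y => ?_) (fun y => ?_) (fun _ v => hadj _ ⟨_, hdom' (hmem v)⟩)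
    (fun v => hadj ⟨_, hg⟩ ⟨_, hdom' (hmem v)⟩)
  · simpa only [hresolvent] using
      LinearPMap.norm_apply_le_of_relative_bound hAnn hdom ha hb hbound _ (hmem y)
  · simpa only [hresolvent] using
      LinearPMap.norm_apply_le_of_relative_bound hAnn hdom' ha' hb' hbound' _ (hmem y)

/-- Let `A ≥ 0` be self-adjoint and `B` densely defined closed with
`dom B ∩ dom B* ⊇ dom A`, and let `a, b` (resp. `a*, b*`) be relative bounds for `B`
(resp. `B*`) with respect to `A`.  Then the operator `(A + I)^{-1/2} B (A + I)^{-1/2}` is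
bounded on its (natural) domain, with closure of norm at most
`(a* + b*)^{1/2} (a + b)^{1/2}`.  Here `Rhalf` denotes `(A + I)^{-1/2}`. -/
theorem sandwiched_operator_bounded
    {H : Type*} [NormedAddCommGroup H] [InnerProductSpace ℂ H] [CompleteSpace H]
    (A : H →ₗ.[ℂ] H) (hAsa : IsSelfAdjoint A)
    (hAnn : ∀ (f : H) (hf : f ∈ A.domain), 0 ≤ (inner ℂ f (A ⟨f, hf⟩) : ℂ).re)
    (B : H →ₗ.[ℂ] H) (hBdense : Dense (B.domain : Set H)) (hBclosed : B.IsClosed)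
    (hdom : A.domain ≤ B.domain) (hdom' : A.domain ≤ B.adjoint.domain)
    (a b astar bstar : ℝ) (ha : 0 ≤ a) (hb : 0 ≤ b) (ha' : 0 ≤ astar) (hb' : 0 ≤ bstar)
    (hbound : ∀ (f : H) (hf : f ∈ A.domain),
      ‖B ⟨f, hdom hf⟩‖ ≤ a * ‖A ⟨f, hf⟩‖ + b * ‖f‖)
    (hbound' : ∀ (f : H) (hf : f ∈ A.domain),
      ‖B.adjoint ⟨f, hdom' hf⟩‖ ≤ astar * ‖A ⟨f, hf⟩‖ + bstar * ‖f‖)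
    (Rhalf : H →L[ℂ] H) (hRsa : IsSelfAdjoint Rhalf)
    (hRnn : ∀ g : H, 0 ≤ (inner ℂ g (Rhalf g) : ℂ).re)
    (hRsq : ∀ g : H, ∃ h : Rhalf (Rhalf g) ∈ A.domain,
      A ⟨Rhalf (Rhalf g), h⟩ + Rhalf (Rhalf g) = g)
    (hRinv : ∀ (f : H) (hf : f ∈ A.domain), Rhalf (Rhalf (A ⟨f, hf⟩ + f)) = f) :
    ∀ (g : H) (h : Rhalf g ∈ B.domain),
      ‖Rhalf (B ⟨Rhalf g, h⟩)‖ ≤ Real.sqrt (astar + bstar) * Real.sqrt (a + b) * ‖g‖ :=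
  sandwiched_operator_bounded_general A hAnn B hBdense hdom hdom' a b astar bstar ha hb ha' hb'
    hbound hbound' Rhalf hRsa hRsq
end

section
/- If A is m-accretive then ker(A) = ker(A*) and ker(A) = ker(A^α) for all α ∈ (0,1]. -/
/-- An operator `A` in a complex Hilbert space is *accretive* if its numerical range lies in
the closed right half-plane: `Re ⟨f, A f⟩ ≥ 0` for all `f ∈ dom A`. -/
def IsAccretive
    {H : Type*} [NormedAddCommGroup H] [InnerProductSpace ℂ H] [CompleteSpace H]
    (A : H →ₗ.[ℂ] H) : Prop :=
  ∀ (f : H) (hf : f ∈ A.domain), 0 ≤ (inner ℂ f (A ⟨f, hf⟩) : ℂ).re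

/-- `A` is *m-accretive*: accretive, closed, and maximal accretive (no proper accretive
extension). -/
def IsMAccretive
    {H : Type*} [NormedAddCommGroup H] [InnerProductSpace ℂ H] [CompleteSpace H]
    (A : H →ₗ.[ℂ] H) : Prop :=
  A.IsClosed ∧ IsAccretive A ∧ ∀ B : H →ₗ.[ℂ] H, IsAccretive B → A ≤ B → B = A

/-- `w` lies in the closed sector `|arg z| ≤ θ` of the right half-plane. -/
def InSector (θ : ℝ) (w : ℂ) : Prop :=
  0 ≤ w.re ∧ |w.im| ≤ Real.tan θ * w.re

/-- `A` is *m-sectorial with vertex 0* and some semi-angle `θ ∈ [0, π/2)`: `A` is m-accretive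
and its numerical range is contained in the sector `|arg z| ≤ θ`. -/
def IsMSectorial
    {H : Type*} [NormedAddCommGroup H] [InnerProductSpace ℂ H] [CompleteSpace H]
    (A : H →ₗ.[ℂ] H) : Prop :=
  IsMAccretive A ∧ ∃ θ : ℝ, 0 ≤ θ ∧ θ < Real.pi / 2 ∧
    ∀ (f : H) (hf : f ∈ A.domain), InSector θ (inner ℂ f (A ⟨f, hf⟩) : ℂ)

/-- `S` is a square root of `R`: `S ∘ S = R`, including equality of the natural domains. -/
def IsSqrtOf
    {H : Type*} [NormedAddCommGroup H] [InnerProductSpace ℂ H] [CompleteSpace H]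
    (S R : H →ₗ.[ℂ] H) : Prop :=
  (∀ f : H, f ∈ R.domain ↔ ∃ h : f ∈ S.domain, S ⟨f, h⟩ ∈ S.domain) ∧
  ∀ (f : H) (hR : f ∈ R.domain) (h : f ∈ S.domain) (h2 : S ⟨f, h⟩ ∈ S.domain),
    R ⟨f, hR⟩ = S ⟨S ⟨f, h⟩, h2⟩

/-- `P` is the family of fractional powers `α ↦ A^α` (for `α ∈ (0,1]`) of the m-accretive
operator `A`: `P 1 = A`, each `P α` is m-accretive with `dom A ⊆ dom (P α)`, and the family
has the semigroup property `A^{α+β} = A^α A^β` (with the correct natural domains). -/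
structure IsFracPowerFamily
    {H : Type*} [NormedAddCommGroup H] [InnerProductSpace ℂ H] [CompleteSpace H]
    (A : H →ₗ.[ℂ] H) (P : ℝ → H →ₗ.[ℂ] H) : Prop where
  one : P 1 = A
  maccretive : ∀ α : ℝ, 0 < α → α ≤ 1 → IsMAccretive (P α)
  dom_le : ∀ α : ℝ, 0 < α → α ≤ 1 → A.domain ≤ (P α).domain
  add_dom : ∀ α β : ℝ, 0 < α → 0 < β → α + β ≤ 1 → ∀ f : H,
    f ∈ (P (α + β)).domain ↔ ∃ h : f ∈ (P β).domain, P β ⟨f, h⟩ ∈ (P α).domain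
  add_eq : ∀ α β : ℝ, 0 < α → 0 < β → α + β ≤ 1 → ∀ (f : H)
    (hs : f ∈ (P (α + β)).domain) (hβ : f ∈ (P β).domain)
    (hα : P β ⟨f, hβ⟩ ∈ (P α).domain),
    P (α + β) ⟨f, hs⟩ = P α ⟨P β ⟨f, hβ⟩, hα⟩

/-!
For accretive `A` and `u ∈ dom A` with `Re ⟪u, A u⟫ = 0`, the quadratic
`t ↦ Re ⟪u + t v, A (u + t v)⟫ ≥ 0` has no constant term, so its linear coefficient vanishes;
applying this to `v` and `i v` gives `⟪u, A v⟫ = -⟪A u, v⟫`. Hence a vector of `ker A` is orthogonal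
to `ran A`, and conversely a vector of `dom A` orthogonal to `ran A` lies in `ker A`, as `dom A` is
dense. Vectors orthogonal to `ran A` form `ker A*`, and by maximality they lie in `dom A`: otherwise
`A` extended by `f ↦ 0` would be a proper accretive extension.

For the powers, `A^{α+β} = A^α A^β` gives `ker A^β ⊆ ker A^{α+β}`. Conversely if `A^{2β} f = 0`
then `u = A^β f` satisfies `A^β u = 0`, so `u ⊥ ran A^β ∋ u` and `u = 0`. Thus
`ker A ⊆ ker A^{2^{-n}} ⊆ ker A^α ⊆ ker A` once `2^{-n} ≤ α`.
-/

open scoped InnerProductSpace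

namespace LinearPMap

variable {R E F : Type*} [Ring R] [AddCommGroup E] [Module R E] [AddCommGroup F] [Module R F]

def ker (T : E →ₗ.[R] F) : Set E :=
  {f | ∃ h : f ∈ T.domain, T ⟨f, h⟩ = 0}

theorem map_eq_zero_of_coe_eq_zero (T : E →ₗ.[R] F) {x : T.domain} (hx : (x : E) = 0) :
    T x = 0 := by
  rw [show x = 0 from Subtype.ext hx, map_zero]

end LinearPMap

namespace LinearPMap

variable {𝕜 E F : Type*} [RCLike 𝕜] [NormedAddCommGroup E] [InnerProductSpace 𝕜 E]
  [CompleteSpace E] [NormedAddCommGroup F] [InnerProductSpace 𝕜 F]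

theorem mem_ker_adjoint_iff {T : E →ₗ.[𝕜] F} (hdense : Dense (T.domain : Set E)) {f : F} :
    f ∈ T.adjoint.ker ↔ ∀ v : T.domain, ⟪f, T v⟫_𝕜 = 0 := by
  constructor
  · rintro ⟨hf, h0⟩ v
    simpa [h0] using (adjoint_isFormalAdjoint hdense ⟨f, hf⟩ v).symm
  · intro hf
    have hfT : f ∈ T.adjoint.domain := mem_adjoint_domain_of_exists f ⟨0, by simp [hf]⟩
    exact ⟨hfT, adjoint_apply_eq hdense _ (by simp [hf])⟩

end LinearPMap

section Accretive

variable {H : Type*} [NormedAddCommGroup H] [InnerProductSpace ℂ H] [CompleteSpace H]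
  {A : H →ₗ.[ℂ] H}

namespace IsAccretive

theorem re_inner_map_add_inner_map_eq_zero (hA : IsAccretive A) {u : A.domain}
    (hu : (⟪(u : H), A u⟫_ℂ).re = 0) (v : A.domain) :
    (⟪(u : H), A v⟫_ℂ + ⟪(v : H), A u⟫_ℂ).re = 0 := by
  have hquad : ∀ t : ℝ, 0 ≤ (⟪(v : H), A v⟫_ℂ).re * (t * t)
      + (⟪(u : H), A v⟫_ℂ + ⟪(v : H), A u⟫_ℂ).re * t + 0 := fun t => by
    have h := hA _ (u + (t : ℂ) • v).2
    simp only [Subtype.coe_eta] at h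
    simp only [A.map_add, A.map_smul, Submodule.coe_add, Submodule.coe_smul, inner_add_left,
      inner_add_right, inner_smul_left, inner_smul_right, Complex.add_re, Complex.mul_re,
      Complex.conj_re, Complex.conj_im, Complex.ofReal_re, Complex.ofReal_im, hu] at h
    rw [Complex.add_re]
    linarith
  have hdisc := discrim_le_zero hquad
  rw [discrim] at hdisc
  nlinarith

theorem inner_map_eq_neg_inner (hA : IsAccretive A) {u : A.domain}
    (hu : (⟪(u : H), A u⟫_ℂ).re = 0) (v : A.domain) :
    ⟪(u : H), A v⟫_ℂ = -⟪A u, (v : H)⟫_ℂ := by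
  have hre := hA.re_inner_map_add_inner_map_eq_zero hu v
  have him := hA.re_inner_map_add_inner_map_eq_zero hu (Complex.I • v)
  rw [← inner_conj_symm (v : H)] at hre
  rw [A.map_smul, Submodule.coe_smul, inner_smul_left, inner_smul_right,
    ← inner_conj_symm (v : H)] at him
  apply Complex.ext
  · simp only [Complex.add_re, Complex.conj_re] at hre
    simp only [Complex.neg_re]
    linarith
  · simp only [Complex.add_re, Complex.mul_re, Complex.conj_re, Complex.conj_im, Complex.I_re,
      Complex.I_im] at him
    simp only [Complex.neg_im]
    linarith

theorem inner_map_eq_zero_of_map_eq_zero (hA : IsAccretive A) {u : A.domain} (hu : A u = 0)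
    (v : A.domain) : ⟪(u : H), A v⟫_ℂ = 0 := by
  simpa [hu] using hA.inner_map_eq_neg_inner (u := u) (by simp [hu]) v

theorem map_eq_zero_of_inner_map_eq_zero (hA : IsAccretive A) (hdense : Dense (A.domain : Set H))
    {u : A.domain} (hu : ∀ v : A.domain, ⟪(u : H), A v⟫_ℂ = 0) : A u = 0 := by
  refine hdense.eq_zero_of_inner_left ℂ fun v hv => ?_
  simpa [hu] using (hA.inner_map_eq_neg_inner (u := u) (by simp [hu]) ⟨v, hv⟩).symm

end IsAccretive

namespace IsMAccretive

theorem mem_domain_of_inner_map_eq_zero (hA : IsMAccretive A) {f : H}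
    (hf : ∀ v : A.domain, ⟪f, A v⟫_ℂ = 0) : f ∈ A.domain := by
  by_contra hfA
  have hacc : IsAccretive (A.supSpanSingleton f 0 hfA) := by
    intro g hg
    obtain ⟨x, hx, _, hz, rfl⟩ := Submodule.mem_sup.1 hg
    obtain ⟨c, rfl⟩ := Submodule.mem_span_singleton.1 hz
    rw [A.supSpanSingleton_apply_mk f 0 hfA x hx c, smul_zero, add_zero, inner_add_left,
      inner_smul_left, hf ⟨x, hx⟩, mul_zero, add_zero]
    exact hA.2.1 x hx
  have hext := hA.2.2 _ hacc (A.left_le_sup _ _)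
  exact hfA (hext ▸ Submodule.mem_sup_right (Submodule.mem_span_singleton_self f))

theorem ker_eq_ker_adjoint (hA : IsMAccretive A) (hdense : Dense (A.domain : Set H)) :
    A.ker = A.adjoint.ker := by
  ext f
  rw [LinearPMap.mem_ker_adjoint_iff hdense]
  constructor
  · rintro ⟨hf, h0⟩
    exact hA.2.1.inner_map_eq_zero_of_map_eq_zero (u := ⟨f, hf⟩) h0
  · intro hf
    have hfA := hA.mem_domain_of_inner_map_eq_zero hf
    exact ⟨hfA, hA.2.1.map_eq_zero_of_inner_map_eq_zero hdense (u := ⟨f, hfA⟩) hf⟩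

end IsMAccretive

namespace IsFracPowerFamily

variable {P : ℝ → H →ₗ.[ℂ] H}

theorem ker_subset_ker_add (hP : IsFracPowerFamily A P) {α β : ℝ} (hα : 0 < α) (hβ : 0 < β)
    (h : α + β ≤ 1) : (P β).ker ⊆ (P (α + β)).ker := by
  rintro f ⟨hf, h0⟩
  have hmem : P β ⟨f, hf⟩ ∈ (P α).domain := h0 ▸ zero_mem _
  refine ⟨(hP.add_dom α β hα hβ h f).2 ⟨hf, hmem⟩, ?_⟩
  rw [hP.add_eq α β hα hβ h f _ hf hmem]
  exact (P α).map_eq_zero_of_coe_eq_zero h0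

theorem ker_subset_ker_of_le (hP : IsFracPowerFamily A P) {α γ : ℝ} (hα : 0 < α) (hαγ : α ≤ γ)
    (hγ : γ ≤ 1) : (P α).ker ⊆ (P γ).ker := by
  rcases hαγ.eq_or_lt with rfl | hlt
  · rfl
  · simpa using hP.ker_subset_ker_add (sub_pos.2 hlt) hα (by linarith)

theorem ker_add_self_subset (hP : IsFracPowerFamily A P) {β : ℝ} (hβ : 0 < β) (h : β + β ≤ 1) :
    (P (β + β)).ker ⊆ (P β).ker := by
  rintro f ⟨hf, h0⟩
  obtain ⟨hfβ, hmem⟩ := (hP.add_dom β β hβ hβ h f).1 hf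
  have hsq : P β ⟨P β ⟨f, hfβ⟩, hmem⟩ = 0 := by rw [← hP.add_eq β β hβ hβ h f hf hfβ hmem, h0]
  have hacc := (hP.maccretive β hβ (by linarith)).2.1
  exact ⟨hfβ, inner_self_eq_zero.1 (hacc.inner_map_eq_zero_of_map_eq_zero hsq ⟨f, hfβ⟩)⟩

theorem ker_one_subset_ker_half_pow (hP : IsFracPowerFamily A P) (n : ℕ) :
    (P 1).ker ⊆ (P ((1 / 2) ^ n)).ker := by
  induction n with
  | zero => simp
  | succ n ih =>
    have hsplit : ((1 : ℝ) / 2) ^ n = (1 / 2) ^ (n + 1) + (1 / 2) ^ (n + 1) := by ring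
    refine ih.trans (hsplit ▸ hP.ker_add_self_subset (by positivity) ?_)
    rw [← hsplit]
    exact pow_le_one₀ (by norm_num) (by norm_num)

theorem ker_eq_ker_one (hP : IsFracPowerFamily A P) {α : ℝ} (hα : 0 < α) (hα1 : α ≤ 1) :
    (P α).ker = (P 1).ker := by
  refine (hP.ker_subset_ker_of_le hα hα1 le_rfl).antisymm ?_
  obtain ⟨n, hn⟩ := exists_pow_lt_of_lt_one hα (show (1 / 2 : ℝ) < 1 by norm_num)
  exact (hP.ker_one_subset_ker_half_pow n).trans
    (hP.ker_subset_ker_of_le (by positivity) hn.le hα1)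

end IsFracPowerFamily

end Accretive

/-- If `A` is m-accretive then `ker A = ker A*` and `ker A = ker A^α` for
all `α ∈ (0,1]`. -/
theorem kernel_of_m_accretive
    {H : Type*} [NormedAddCommGroup H] [InnerProductSpace ℂ H] [CompleteSpace H]
    (A : H →ₗ.[ℂ] H) (hdense : Dense (A.domain : Set H)) (hA : IsMAccretive A)
    (P : ℝ → H →ₗ.[ℂ] H) (hP : IsFracPowerFamily A P) :
    ({f : H | ∃ h : f ∈ A.domain, A ⟨f, h⟩ = 0} =
      {f : H | ∃ h : f ∈ A.adjoint.domain, A.adjoint ⟨f, h⟩ = 0}) ∧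
    ∀ α : ℝ, 0 < α → α ≤ 1 →
      {f : H | ∃ h : f ∈ (P α).domain, P α ⟨f, h⟩ = 0} =
        {f : H | ∃ h : f ∈ A.domain, A ⟨f, h⟩ = 0} :=
  ⟨hA.ker_eq_ker_adjoint hdense, fun _ hα hα1 => hP.one ▸ hP.ker_eq_ker_one hα hα1⟩
end

section
/- For any m-accretive operator S in H and z ∈ ℂ with Re(z) ∈ (0,1), the fractional power satisfies ‖(S + I)^{-z}‖ ≤ |sin(πz)| / sin(π Re(z)), using the integral representation (S+I)^{-z} = (sin(πz)/π) ∫₀^∞ t^{-z} (S + (t+1)I)^{-1} dt. -/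
open MeasureTheory

/-!
Each resolvent obeys `‖(S + (t+1))⁻¹‖ ≤ 1/(t+1)`, so the integrand is bounded in norm by
`t^(-Re z)/(t+1)`. Substituting `t = x/(1-x)` turns the integral of this bound into the Beta
integral `B(1 - Re z, Re z) = Γ(1 - Re z) Γ(Re z) = π / sin(π Re z)`.
-/

open Set Real

lemma integral_Ioo_rpow_mul_one_sub_rpow {u v : ℝ} (hu : 0 < u) (hv : 0 < v) :
    ∫ x in Ioo (0 : ℝ) 1, x ^ (u - 1) * (1 - x) ^ (v - 1) =
      Gamma u * Gamma v / Gamma (u + v) := by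
  apply Complex.ofReal_injective
  push_cast
  rw [← integral_complex_ofReal, ← Complex.Gamma_ofReal, ← Complex.Gamma_ofReal,
    ← Complex.Gamma_ofReal, Complex.ofReal_add,
    ← Complex.betaIntegral_eq_Gamma_mul_div _ _ (by simpa) (by simpa), Complex.betaIntegral,
    intervalIntegral.integral_of_le zero_le_one, integral_Ioc_eq_integral_Ioo]
  refine setIntegral_congr_fun measurableSet_Ioo fun x hx => ?_
  push_cast
  rw [Complex.ofReal_cpow hx.1.le, Complex.ofReal_cpow (sub_nonneg.2 hx.2.le)]
  push_cast
  rfl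

lemma image_div_one_sub_Ioo : (fun x : ℝ => x / (1 - x)) '' Ioo 0 1 = Ioi 0 := by
  ext t
  constructor
  · rintro ⟨x, hx, rfl⟩
    exact div_pos hx.1 (sub_pos.2 hx.2)
  · intro (ht : 0 < t)
    refine ⟨t / (1 + t), ⟨by positivity, (div_lt_one (by positivity)).2 (by linarith)⟩, ?_⟩
    field_simp
    ring

lemma integral_Ioi_rpow_div_one_add_rpow {u v : ℝ} (hu : 0 < u) (hv : 0 < v) :
    ∫ t in Ioi (0 : ℝ), t ^ (u - 1) / (1 + t) ^ (u + v) =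
      Gamma u * Gamma v / Gamma (u + v) := by
  have hderiv : ∀ x ∈ Ioo (0 : ℝ) 1,
      HasDerivWithinAt (fun x => x / (1 - x)) ((1 - x) ^ 2)⁻¹ (Ioo 0 1) x := by
    intro x hx
    refine (((hasDerivAt_id x).div ((hasDerivAt_id x).const_sub 1)
      (sub_pos.2 hx.2).ne').hasDerivWithinAt).congr_deriv ?_
    simp only [id]
    ring
  have hinj : InjOn (fun x : ℝ => x / (1 - x)) (Ioo 0 1) := by
    intro x hx y hy hxy
    have hx1 : 1 - x ≠ 0 := (sub_pos.2 hx.2).ne'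
    have hy1 : 1 - y ≠ 0 := (sub_pos.2 hy.2).ne'
    field_simp at hxy
    linarith
  rw [← image_div_one_sub_Ioo, integral_image_eq_integral_abs_deriv_smul measurableSet_Ioo hderiv
    hinj, ← integral_Ioo_rpow_mul_one_sub_rpow hu hv]
  refine setIntegral_congr_fun measurableSet_Ioo fun x ⟨hx0, hx1⟩ => ?_
  have hy : 0 < 1 - x := sub_pos.2 hx1
  have hsum : 1 + x / (1 - x) = (1 - x)⁻¹ := by field_simp; ring
  have hsplit : (1 - x) ^ (u + v) = (1 - x) ^ (u - 1) * (1 - x) ^ (v - 1) * (1 - x) ^ 2 := by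
    rw [← rpow_add hy, ← rpow_natCast, ← rpow_add hy]
    ring_nf
  rw [smul_eq_mul, hsum, inv_rpow hy.le, div_rpow hx0.le hy.le, abs_of_pos (by positivity)]
  have hyu : 0 < (1 - x) ^ (u - 1) := rpow_pos_of_pos hy _
  have hyv : 0 < (1 - x) ^ (v - 1) := rpow_pos_of_pos hy _
  field_simp
  rw [hsplit]
  ring

lemma integral_Ioi_rpow_neg_div_add_one {a : ℝ} (h0 : 0 < a) (h1 : a < 1) :
    ∫ t in Ioi (0 : ℝ), t ^ (-a) / (t + 1) = π / sin (π * a) := by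
  have hbeta := integral_Ioi_rpow_div_one_add_rpow (sub_pos.2 h1) h0
  rw [sub_add_cancel, Gamma_one, div_one, mul_comm, Gamma_mul_Gamma_one_sub] at hbeta
  rw [← hbeta]
  refine setIntegral_congr_fun measurableSet_Ioi fun t _ => ?_
  rw [sub_sub_cancel_left, rpow_one, add_comm]

lemma sin_pi_mul_pos {a : ℝ} (h0 : 0 < a) (h1 : a < 1) : 0 < sin (π * a) :=
  sin_pos_of_pos_of_lt_pi (by positivity) (by nlinarith [pi_pos])

-- Integrability is read off from the value: a non-integrable function has integral `0`.
lemma integrableOn_rpow_neg_div_add_one {a : ℝ} (h0 : 0 < a) (h1 : a < 1) :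
    IntegrableOn (fun t : ℝ => t ^ (-a) / (t + 1)) (Ioi 0) := by
  refine Integrable.of_integral_ne_zero ?_
  rw [integral_Ioi_rpow_neg_div_add_one h0 h1]
  exact (div_pos pi_pos (sin_pi_mul_pos h0 h1)).ne'

theorem norm_setIntegral_cpow_neg_smul_le {E : Type*} [NormedAddCommGroup E] [NormedSpace ℂ E]
    {z : ℂ} (hz : 0 < z.re) (hz' : z.re < 1) {g : ℝ → E} {M : ℝ}
    (hg : ∀ t, 0 < t → ‖g t‖ ≤ M / (t + 1)) :
    ‖∫ t in Ioi (0 : ℝ), (t : ℂ) ^ (-z) • g t‖ ≤ π / sin (π * z.re) * M := by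
  calc ‖∫ t in Ioi (0 : ℝ), (t : ℂ) ^ (-z) • g t‖
      ≤ ∫ t in Ioi (0 : ℝ), t ^ (-z.re) / (t + 1) * M := by
        refine (norm_integral_le_integral_norm _).trans (integral_mono_of_nonneg
          (.of_forall fun _ => norm_nonneg _)
          ((integrableOn_rpow_neg_div_add_one hz hz').mul_const M) ?_)
        filter_upwards [ae_restrict_mem measurableSet_Ioi] with t (ht : 0 < t)
        rw [norm_smul, Complex.norm_cpow_eq_rpow_re_of_pos ht, Complex.neg_re, div_mul_comm,
          mul_comm]
        exact mul_le_mul_of_nonneg_right (hg t ht) (rpow_nonneg ht.le _)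
    _ = π / sin (π * z.re) * M := by
        rw [integral_mul_const, integral_Ioi_rpow_neg_div_add_one hz hz']

theorem fractional_power_norm_bound_general
    {H : Type*} [NormedAddCommGroup H] [InnerProductSpace ℂ H] [CompleteSpace H]
    (R : ℝ → H →L[ℂ] H)
    (hRnorm : ∀ t : ℝ, 0 ≤ t → ‖R t‖ ≤ 1 / (t + 1))
    (z : ℂ) (hz : 0 < z.re) (hz' : z.re < 1)
    (F : H →L[ℂ] H)
    (hF : ∀ f : H, F f =
      (Complex.sin (Real.pi * z) / (Real.pi : ℂ)) •
        ∫ t in Set.Ioi (0 : ℝ), ((t : ℂ) ^ (-z)) • R t f) :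
    ‖F‖ ≤ ‖Complex.sin (Real.pi * z)‖ / Real.sin (Real.pi * z.re) := by
  have hsin := sin_pi_mul_pos hz hz'
  refine ContinuousLinearMap.opNorm_le_bound _ (by positivity) fun f => ?_
  have hRf : ∀ t, 0 < t → ‖R t f‖ ≤ ‖f‖ / (t + 1) := fun t ht => by
    simpa [div_eq_inv_mul, mul_comm] using (R t).le_of_opNorm_le (hRnorm t ht.le) f
  calc ‖F f‖
      = ‖Complex.sin (π * z)‖ / π *
          ‖∫ t in Ioi (0 : ℝ), (t : ℂ) ^ (-z) • R t f‖ := by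
        rw [hF, norm_smul, norm_div, Complex.norm_real, norm_of_nonneg pi_pos.le]
    _ ≤ ‖Complex.sin (π * z)‖ / π * (π / sin (π * z.re) * ‖f‖) := by
        gcongr
        exact norm_setIntegral_cpow_neg_smul_le hz hz' hRf
    _ = ‖Complex.sin (π * z)‖ / sin (π * z.re) * ‖f‖ := by
        field_simp

/-- For any m-accretive operator `S` in `H` and `z ∈ ℂ` with
`Re z ∈ (0,1)`, the complex fractional power, defined by the norm-convergent Bochner
integral `(S+I)^{-z} = (sin (π z) / π) ∫₀^∞ t^{-z} (S + (t+1) I)⁻¹ dt`, satisfies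
`‖(S+I)^{-z}‖ ≤ |sin (π z)| / sin (π Re z)`.  Here `R t` denotes the bounded resolvent
`(S + (t+1) I)⁻¹`, which satisfies `‖R t‖ ≤ 1/(t+1)`. -/
theorem fractional_power_norm_bound
    {H : Type*} [NormedAddCommGroup H] [InnerProductSpace ℂ H] [CompleteSpace H]
    (S : H →ₗ.[ℂ] H) (hdense : Dense (S.domain : Set H)) (hS : IsMAccretive S)
    (R : ℝ → H →L[ℂ] H)
    (hRl : ∀ t : ℝ, 0 ≤ t → ∀ (f : H) (hf : f ∈ S.domain),
      R t (S ⟨f, hf⟩ + (((t : ℂ) + 1)) • f) = f)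
    (hRr : ∀ t : ℝ, 0 ≤ t → ∀ g : H,
      ∃ h : R t g ∈ S.domain, S ⟨R t g, h⟩ + (((t : ℂ) + 1)) • R t g = g)
    (hRnorm : ∀ t : ℝ, 0 ≤ t → ‖R t‖ ≤ 1 / (t + 1))
    (z : ℂ) (hz : 0 < z.re) (hz' : z.re < 1)
    (F : H →L[ℂ] H)
    (hF : ∀ f : H, F f =
      (Complex.sin (Real.pi * z) / (Real.pi : ℂ)) •
        ∫ t in Set.Ioi (0 : ℝ), ((t : ℂ) ^ (-z)) • R t f) :
    ‖F‖ ≤ ‖Complex.sin (Real.pi * z)‖ / Real.sin (Real.pi * z.re) :=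
  fractional_power_norm_bound_general R hRnorm z hz hz' F hF
end
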